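/- The 4-tensor R defined on ℝ^{3s} by R(U_a,U_b,U_c,U_d) := R¹(U_a,U_b,U_c,U_d) and R(U_a,U_b,U_c,T_d) = R(U_a,U_b,T_c,U_d) = R(U_a,T_b,U_c,U_d) = R(T_a,U_b,U_c,U_d) := R²(U_a,U_b,U_c,U_d), with all other components zero, satisfies the symmetries of an algebraic curvature tensor: antisymmetry in the first two slots, symmetry under interchange of the first and second pairs, and the first Bianchi identity. -/

import Mathlib

open scoped BigOperators

/-- A (component-level) algebraic curvature tensor: antisymmetry in the first
two slots, pair-interchange symmetry, and the first Bianchi identity. -/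
def IsACT {ι : Type*} (F : ι → ι → ι → ι → ℝ) : Prop :=
  (∀ x y z w, F x y z w = - F y x z w) ∧
  (∀ x y z w, F x y z w = F z w x y) ∧
  (∀ x y z w, F x y z w + F y z x w + F z x y w = 0)

/-- Basis of `ℝ^{3s}`: `(0, a) = U_a`, `(1, a) = V_a`, `(2, a) = T_a`. -/
abbrev BasisIdx (s : ℕ) := Fin 3 × Fin s

/-- The tensor of Lemma 2.1: `R(U_a,U_b,U_c,U_d) = R¹_{abcd}`, components with
exactly one `T` index (and the other three `U` indices) equal `R²_{abcd}`
(replacing the `T` index by the corresponding `U` index), all else zero. -/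
def bigR {s : ℕ} (R1 R2 : Fin s → Fin s → Fin s → Fin s → ℝ) :
    BasisIdx s → BasisIdx s → BasisIdx s → BasisIdx s → ℝ :=
  fun x y z w =>
    if x.1 = 0 ∧ y.1 = 0 ∧ z.1 = 0 ∧ w.1 = 0 then R1 x.2 y.2 z.2 w.2
    else if (x.1 = 2 ∧ y.1 = 0 ∧ z.1 = 0 ∧ w.1 = 0) ∨ (x.1 = 0 ∧ y.1 = 2 ∧ z.1 = 0 ∧ w.1 = 0) ∨
            (x.1 = 0 ∧ y.1 = 0 ∧ z.1 = 2 ∧ w.1 = 0) ∨ (x.1 = 0 ∧ y.1 = 0 ∧ z.1 = 0 ∧ w.1 = 2)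
      then R2 x.2 y.2 z.2 w.2
    else 0

/-!
`R` is the sum of the pointwise products `W₁ · R¹` and `W₂ · R²`, where `Rⁱ` is evaluated at the
`Fin s`-parts of the indices and the weights depend only on the kinds (`U`, `V`, `T`) of the
four indices: `W₁` detects `UUUU` and `W₂` detects "one `T`, three `U`". Both weights are
invariant under all permutations of the four slots, and each curvature identity only compares
values at permuted arguments, so multiplying by such a weight preserves all three of them.
-/

/-- These three permutations of the slots generate the full symmetric group on four letters. -/
def IsSymmWeight {ι : Type*} (W : ι → ι → ι → ι → ℝ) : Prop :=
  (∀ x y z w, W y x z w = W x y z w) ∧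
  (∀ x y z w, W z w x y = W x y z w) ∧
  (∀ x y z w, W y z x w = W x y z w)

theorem IsSymmWeight.comp {ι κ : Type*} {W : ι → ι → ι → ι → ℝ} (hW : IsSymmWeight W)
    (π : κ → ι) : IsSymmWeight fun x y z w => W (π x) (π y) (π z) (π w) :=
  ⟨fun _ _ _ _ => hW.1 _ _ _ _, fun _ _ _ _ => hW.2.1 _ _ _ _, fun _ _ _ _ => hW.2.2 _ _ _ _⟩

namespace IsACT

variable {ι κ : Type*} {F G : ι → ι → ι → ι → ℝ}

theorem add (hF : IsACT F) (hG : IsACT G) : IsACT (F + G) := by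
  obtain ⟨hF₁, hF₂, hF₃⟩ := hF
  obtain ⟨hG₁, hG₂, hG₃⟩ := hG
  refine ⟨fun x y z w => ?_, fun x y z w => ?_, fun x y z w => ?_⟩ <;>
    simp only [Pi.add_apply]
  · rw [hF₁, hG₁, neg_add]
  · rw [hF₂, hG₂]
  · linarith [hF₃ x y z w, hG₃ x y z w]

theorem comp (hF : IsACT F) (π : κ → ι) :
    IsACT fun x y z w => F (π x) (π y) (π z) (π w) :=
  ⟨fun _ _ _ _ => hF.1 _ _ _ _, fun _ _ _ _ => hF.2.1 _ _ _ _, fun _ _ _ _ => hF.2.2 _ _ _ _⟩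

theorem weight_mul (hF : IsACT F) {W : ι → ι → ι → ι → ℝ} (hW : IsSymmWeight W) :
    IsACT (W * F) := by
  obtain ⟨hF₁, hF₂, hF₃⟩ := hF
  obtain ⟨hW₁, hW₂, hW₃⟩ := hW
  refine ⟨fun x y z w => ?_, fun x y z w => ?_, fun x y z w => ?_⟩ <;>
    simp only [Pi.mul_apply]
  · rw [hW₁, hF₁, mul_neg]
  · rw [hW₂, hF₂]
  · rw [hW₃, hW₃ y, hW₃, ← mul_add, ← mul_add, hF₃, mul_zero]

end IsACT

def allUWeight (a b c d : Fin 3) : ℝ :=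
  if a = 0 ∧ b = 0 ∧ c = 0 ∧ d = 0 then 1 else 0

def oneTWeight (a b c d : Fin 3) : ℝ :=
  if (a = 2 ∧ b = 0 ∧ c = 0 ∧ d = 0) ∨ (a = 0 ∧ b = 2 ∧ c = 0 ∧ d = 0) ∨
      (a = 0 ∧ b = 0 ∧ c = 2 ∧ d = 0) ∨ (a = 0 ∧ b = 0 ∧ c = 0 ∧ d = 2) then 1 else 0

theorem isSymmWeight_allUWeight : IsSymmWeight allUWeight := by
  refine ⟨fun a b c d => ?_, fun a b c d => ?_, fun a b c d => ?_⟩ <;>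
    exact if_congr (by tauto) rfl rfl

theorem isSymmWeight_oneTWeight : IsSymmWeight oneTWeight := by
  refine ⟨fun a b c d => ?_, fun a b c d => ?_, fun a b c d => ?_⟩ <;>
    exact if_congr (by tauto) rfl rfl

theorem bigR_eq_weighted_sum {s : ℕ} (R1 R2 : Fin s → Fin s → Fin s → Fin s → ℝ) :
    bigR R1 R2 =
      (fun x y z w => allUWeight x.1 y.1 z.1 w.1) * (fun x y z w => R1 x.2 y.2 z.2 w.2) +
      (fun x y z w => oneTWeight x.1 y.1 z.1 w.1) * (fun x y z w => R2 x.2 y.2 z.2 w.2) := by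
  funext x y z w
  simp only [bigR, allUWeight, oneTWeight, Pi.add_apply, Pi.mul_apply]
  split_ifs <;> simp_all

theorem stmt0_general (s : ℕ) (R1 R2 : Fin s → Fin s → Fin s → Fin s → ℝ)
    (h1 : IsACT R1) (h2 : IsACT R2) : IsACT (bigR R1 R2) := by
  rw [bigR_eq_weighted_sum]
  exact ((h1.comp Prod.snd).weight_mul (isSymmWeight_allUWeight.comp Prod.fst)).add
    ((h2.comp Prod.snd).weight_mul (isSymmWeight_oneTWeight.comp Prod.fst))

/-- the tensor `R = R(R¹, R²)` of Lemma 2.1 satisfies the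
symmetries of an algebraic curvature tensor. -/
theorem stmt0 (s : ℕ) (hs : 2 ≤ s) (R1 R2 : Fin s → Fin s → Fin s → Fin s → ℝ)
    (h1 : IsACT R1) (h2 : IsACT R2) : IsACT (bigR R1 R2) :=
  stmt0_general s R1 R2 h1 h2
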